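/- Let (Π_max, H_max, Λ_max) be a maximal solution of AΠ + BH = ΠΛ, CΠ + DH = 0. If vectors x, x₊ and input u satisfy x₊ = Ax + Bu, 0 = Cx + Du, and x₊ ∈ Im Π_max, then x ∈ Im Π_max. -/

import Mathlib

/-!
If `A x + B u = Π ξ` and `C x + D u = 0`, then appending the column `x` to `Π`, the column `u`
to `H`, and the column `ξ` (over a zero row) to `Λ` gives another solution of
`A Π + B H = Π Λ`, `C Π + D H = 0`. Its image contains `x`, so by maximality `x ∈ Im Π_max`.
-/

open Matrix

noncomputable section

/-- Map a complex matrix entrywise to rational functions. -/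
def mc {a b : ℕ} (M : Matrix (Fin a) (Fin b) ℂ) : Matrix (Fin a) (Fin b) (RatFunc ℂ) :=
  M.map (⇑(RatFunc.C : ℂ →+* RatFunc ℂ))

/-- The resolvent `(z I − M)⁻¹` as a matrix of rational functions. -/
def res {a : ℕ} (M : Matrix (Fin a) (Fin a) ℂ) : Matrix (Fin a) (Fin a) (RatFunc ℂ) :=
  ((Matrix.scalar (Fin a) (RatFunc.X : RatFunc ℂ)) - mc M)⁻¹

/-- The "anti-resolvent" `(z I + M)⁻¹`, used for para-hermitian conjugates. -/
def resneg {a : ℕ} (M : Matrix (Fin a) (Fin a) ℂ) : Matrix (Fin a) (Fin a) (RatFunc ℂ) :=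
  ((Matrix.scalar (Fin a) (RatFunc.X : RatFunc ℂ)) + mc M)⁻¹

/-- Observability of a pair `(C, A)`. -/
def Observable {p n : ℕ} (C : Matrix (Fin p) (Fin n) ℂ) (A : Matrix (Fin n) (Fin n) ℂ) : Prop :=
  ∀ v : Fin n → ℂ, (∀ k : ℕ, C *ᵥ ((A ^ k) *ᵥ v) = 0) → v = 0

/-- Controllability of a pair `(Λ, G)`. -/
def Controllable {r m : ℕ} (L : Matrix (Fin r) (Fin r) ℂ) (G : Matrix (Fin r) (Fin m) ℂ) : Prop :=
  ∀ y : Fin r → ℂ, (∀ k : ℕ, y ᵥ* ((L ^ k) * G) = 0) → y = 0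

/-- The range (column space) of a matrix, as a submodule of `ℂⁿ`. -/
def mrange {a b : ℕ} (M : Matrix (Fin a) (Fin b) ℂ) : Submodule ℂ (Fin a → ℂ) :=
  LinearMap.range M.mulVecLin

/-- The set of states reachable from the origin by a finite input sequence
producing identically zero output along the way (the minimal input-containing
subspace `C*(Σ)`). -/
def OutNullReach {n p q : ℕ} (A : Matrix (Fin n) (Fin n) ℂ) (B : Matrix (Fin n) (Fin q) ℂ)
    (C : Matrix (Fin p) (Fin n) ℂ) (D : Matrix (Fin p) (Fin q) ℂ) (x : Fin n → ℂ) : Prop :=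
  ∃ (j : ℕ) (ξ : ℕ → (Fin n → ℂ)) (u : ℕ → (Fin q → ℂ)),
    ξ 0 = 0 ∧ (∀ i < j, ξ (i + 1) = A *ᵥ ξ i + B *ᵥ u i ∧ C *ᵥ ξ i + D *ᵥ u i = 0) ∧ ξ j = x

section Solution

variable {R : Type*} [Semiring R] {n q p ι κ : Type*} [Fintype n] [Fintype q] [Fintype ι]

def IsNullingSolution (A : Matrix n n R) (B : Matrix n q R) (C : Matrix p n R) (D : Matrix p q R)
    (P : Matrix n ι R) (H : Matrix q ι R) (L : Matrix ι ι R) : Prop :=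
  A * P + B * H = P * L ∧ C * P + D * H = 0

theorem fromCols_add_fromCols {m n₁ n₂ : Type*} (A₁ B₁ : Matrix m n₁ R) (A₂ B₂ : Matrix m n₂ R) :
    fromCols A₁ A₂ + fromCols B₁ B₂ = fromCols (A₁ + B₁) (A₂ + B₂) := by
  ext _ (_ | _) <;> rfl

variable {A : Matrix n n R} {B : Matrix n q R} {C : Matrix p n R} {D : Matrix p q R}
  {P : Matrix n ι R} {H : Matrix q ι R} {L : Matrix ι ι R}

theorem IsNullingSolution.submatrix [Fintype κ] (h : IsNullingSolution A B C D P H L)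
    (e : κ ≃ ι) :
    IsNullingSolution A B C D (P.submatrix id e) (H.submatrix id e) (L.submatrix e e) := by
  obtain ⟨h₁, h₂⟩ := h
  constructor
  · change (A * P + B * H).submatrix id e = _
    rw [h₁, submatrix_mul_equiv]
  · change (C * P + D * H).submatrix id e = _
    rw [h₂, submatrix_zero, Pi.zero_def]
    rfl

theorem IsNullingSolution.fromCols (h : IsNullingSolution A B C D P H L) {x : n → R}
    {u : q → R} {ξ : ι → R} (hx : A *ᵥ x + B *ᵥ u = P *ᵥ ξ) (hy : C *ᵥ x + D *ᵥ u = 0) :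
    IsNullingSolution A B C D (fromCols P (replicateCol Unit x))
      (fromCols H (replicateCol Unit u)) (fromRows (fromCols L (replicateCol Unit ξ)) 0) := by
  obtain ⟨h₁, h₂⟩ := h
  constructor
  · rw [mul_fromCols, mul_fromCols, fromCols_add_fromCols, fromCols_mul_fromRows,
      Matrix.mul_zero, add_zero, mul_fromCols, h₁, ← replicateCol_mulVec, ← replicateCol_mulVec,
      ← replicateCol_mulVec, ← replicateCol_add, hx]
  · rw [mul_fromCols, mul_fromCols, fromCols_add_fromCols, h₂, ← replicateCol_mulVec,
      ← replicateCol_mulVec, ← replicateCol_add, hy, replicateCol_zero, fromCols_zero]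

end Solution

section Range

variable {R : Type*} [CommSemiring R] {n ι κ : Type*} [Fintype ι]

theorem mem_range_fromCols_replicateCol (P : Matrix n ι R) (x : n → R) :
    x ∈ LinearMap.range (fromCols P (replicateCol Unit x)).mulVecLin :=
  ⟨Sum.elim 0 1, by ext; simp [mulVec, dotProduct]⟩

theorem range_mulVecLin_submatrix [Fintype κ] (P : Matrix n ι R) (e : κ ≃ ι) :
    LinearMap.range (P.submatrix id e).mulVecLin = LinearMap.range P.mulVecLin := by
  ext x
  simp only [LinearMap.mem_range, mulVecLin_apply, submatrix_mulVec_equiv, Function.comp_id]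
  exact ⟨fun ⟨v, hv⟩ => ⟨_, hv⟩, fun ⟨v, hv⟩ => ⟨v ∘ e, by simpa [Function.comp_assoc] using hv⟩⟩

end Range

/-- for a maximal solution, an output-nulling backward step stays in `Im Π_max`. -/
theorem stmt4 {n p q s : ℕ}
    (A : Matrix (Fin n) (Fin n) ℂ) (B : Matrix (Fin n) (Fin q) ℂ)
    (C : Matrix (Fin p) (Fin n) ℂ) (D : Matrix (Fin p) (Fin q) ℂ)
    (Pmax : Matrix (Fin n) (Fin s) ℂ) (Hmax : Matrix (Fin q) (Fin s) ℂ)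
    (Λmax : Matrix (Fin s) (Fin s) ℂ)
    (h1 : A * Pmax + B * Hmax = Pmax * Λmax) (h2 : C * Pmax + D * Hmax = 0)
    (hmax : ∀ (t : ℕ) (P : Matrix (Fin n) (Fin t) ℂ) (H : Matrix (Fin q) (Fin t) ℂ)
      (L : Matrix (Fin t) (Fin t) ℂ),
      A * P + B * H = P * L → C * P + D * H = 0 → mrange P ≤ mrange Pmax)
    (x xp : Fin n → ℂ) (u : Fin q → ℂ)
    (hx : xp = A *ᵥ x + B *ᵥ u) (hy : C *ᵥ x + D *ᵥ u = 0)
    (hxp : ∃ ξ : Fin s → ℂ, Pmax *ᵥ ξ = xp) :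
    ∃ ξ : Fin s → ℂ, Pmax *ᵥ ξ = x := by
  obtain ⟨ξ, hξ⟩ := hxp
  have hmax' : ∀ {ι : Type} [Fintype ι] (P : Matrix (Fin n) ι ℂ) (H : Matrix (Fin q) ι ℂ)
      (L : Matrix ι ι ℂ), IsNullingSolution A B C D P H L →
      LinearMap.range P.mulVecLin ≤ mrange Pmax := fun P H L h => by
    rw [← range_mulVecLin_submatrix P (Fintype.equivFin _).symm]
    exact hmax _ _ _ _ (h.submatrix _).1 (h.submatrix _).2
  have hsol := IsNullingSolution.fromCols ⟨h1, h2⟩ (hξ ▸ hx.symm) hy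
  exact hmax' _ _ _ hsol (mem_range_fromCols_replicateCol Pmax x)
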